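/- arXiv:1603.04415 — 2 statements merged into one kernel-verified Lean document; each statement's English description precedes it below -/
import Mathlib

section
/- Let f be a conjunctive Boolean network with strongly connected dependency graph D of loop number p*. There is a bijection between the set of periodic orbits of f and the set of binary necklaces of length p*; moreover, this bijection maps each periodic orbit of period p to a necklace of order p. -/
/-- A walk of length `ℓ` from `a` to `b` in the digraph with edge relation `E`. -/
def IsWalk {V : Type*} (E : V → V → Prop) (w : ℕ → V) (ℓ : ℕ) (a b : V) : Prop :=
  w 0 = a ∧ w ℓ = b ∧ ∀ i < ℓ, E (w i) (w (i + 1))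

/-- A digraph is strongly connected if any vertex can reach any other by a walk. -/
def StronglyConnected {V : Type*} (E : V → V → Prop) : Prop :=
  ∀ a b : V, ∃ w ℓ, IsWalk E w ℓ a b

/-- A cycle of length `ℓ`: a closed walk with no repeated vertices other than start/end. -/
def IsCycle {V : Type*} (E : V → V → Prop) (w : ℕ → V) (ℓ : ℕ) : Prop :=
  0 < ℓ ∧ w ℓ = w 0 ∧ (∀ i < ℓ, E (w i) (w (i + 1))) ∧
    ∀ i j, i < ℓ → j < ℓ → w i = w j → i = j

/-- `RelP E p a b` (written `a ∼ₚ b`): some walk from `a` to `b` has length divisible by `p`. -/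
def RelP {V : Type*} (E : V → V → Prop) (p : ℕ) (a b : V) : Prop :=
  ∃ w ℓ, IsWalk E w ℓ a b ∧ p ∣ ℓ

/-- The conjunctive Boolean network with in-neighbor sets `N`: coordinate `i` updates
to the AND (product over `F₂`) of the variables indexed by `N i`. -/
noncomputable def cbn {n : ℕ} (N : Fin n → Finset (Fin n)) (x : Fin n → Bool) : Fin n → Bool :=
  fun i => (N i).inf x

/-- The dependency graph of the conjunctive Boolean network: edge `j → i` iff `j ∈ N i`. -/
def depEdge {n : ℕ} (N : Fin n → Finset (Fin n)) (j i : Fin n) : Prop := j ∈ N i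

/-- Cyclic rotation of a string of length `p` by `r` positions. -/
def rotate {p : ℕ} (s : Fin p → Bool) (r : ℕ) : Fin p → Bool :=
  fun k => s ⟨((k : ℕ) + r) % p, Nat.mod_lt _ (Nat.lt_of_le_of_lt (Nat.zero_le _) k.isLt)⟩

section AuxWalk
variable {V : Type*} {E : V → V → Prop}

lemma walk_append {w1 w2 : ℕ → V} {ℓ1 ℓ2 : ℕ} {a b c : V}
    (h1 : IsWalk E w1 ℓ1 a b) (h2 : IsWalk E w2 ℓ2 b c) :
    ∃ w, IsWalk E w (ℓ1 + ℓ2) a c := by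
  obtain ⟨ha1, hb1, he1⟩ := h1
  obtain ⟨hb2, hc2, he2⟩ := h2
  refine ⟨fun k => if k ≤ ℓ1 then w1 k else w2 (k - ℓ1), ?_, ?_, ?_⟩
  · simp [ha1]
  · by_cases h : ℓ2 = 0
    · subst h
      simp only [Nat.add_zero, le_refl, if_pos]
      rw [hb1, ← hb2]; exact hc2 ▸ rfl
    · have : ¬ (ℓ1 + ℓ2 ≤ ℓ1) := by omega
      simp only [this, if_neg, not_false_iff]
      have : ℓ1 + ℓ2 - ℓ1 = ℓ2 := by omega
      rw [this, hc2]
  · intro i hi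
    by_cases h1' : i + 1 ≤ ℓ1
    · have : i ≤ ℓ1 := by omega
      simp only [this, h1', if_pos]
      exact he1 i (by omega)
    · by_cases h2' : i ≤ ℓ1
      · have hie : i = ℓ1 := by omega
        subst hie
        have hl2 : 0 < ℓ2 := by omega
        simp only [le_refl, if_pos, h1', if_neg, not_false_iff]
        have : i + 1 - i = 1 := by omega
        rw [this, hb1, ← hb2]
        exact he2 0 hl2
      · have h3' : ¬ (i + 1 ≤ ℓ1) := by omega
        simp only [h2', h3', if_neg, not_false_iff]
        have : i + 1 - ℓ1 = (i - ℓ1) + 1 := by omega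
        rw [this]
        exact he2 (i - ℓ1) (by omega)

lemma walk_single {j i : V} (h : E j i) :
    IsWalk E (fun t => if t = 0 then j else i) 1 j i := by
  refine ⟨rfl, rfl, ?_⟩
  intro k hk
  interval_cases k
  simpa using h

lemma walk_const (a : V) : IsWalk E (fun _ => a) 0 a a :=
  ⟨rfl, rfl, fun i hi => absurd hi (by omega)⟩

lemma walk_prepend {w : ℕ → V} {t : ℕ} {k j i : V} (hkj : E k j)
    (h : IsWalk E w t j i) : ∃ w', IsWalk E w' (t + 1) k i := by
  refine ⟨fun m => if m = 0 then k else w (m - 1), rfl, ?_, ?_⟩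
  · simp only [Nat.add_one_ne_zero, if_neg, not_false_iff]
    simpa using h.2.1
  · intro m hm
    rcases Nat.eq_zero_or_pos m with h0 | h0
    · subst h0
      simpa [h.1] using hkj
    · have h1 : ¬ (m = 0) := by omega
      have h2 : ¬ (m + 1 = 0) := by omega
      simp only [h1, h2, if_neg, not_false_iff]
      have : m + 1 - 1 = (m - 1) + 1 := by omega
      rw [this]
      exact h.2.2 (m - 1) (by omega)

lemma walk_unprepend {w : ℕ → V} {t : ℕ} {k i : V}
    (h : IsWalk E w (t + 1) k i) :
    E k (w 1) ∧ IsWalk E (fun m => w (m + 1)) t (w 1) i := by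
  refine ⟨?_, rfl, h.2.1, ?_⟩
  · have := h.2.2 0 (by omega)
    rwa [h.1] at this
  · intro m hm
    exact h.2.2 (m + 1) (by omega)

lemma closed_walk_dvd {p : ℕ} (hdiv : ∀ w ℓ, IsCycle E w ℓ → p ∣ ℓ) :
    ∀ ℓ (w : ℕ → V), w ℓ = w 0 → (∀ i < ℓ, E (w i) (w (i + 1))) → p ∣ ℓ := by
  intro ℓ
  induction ℓ using Nat.strong_induction_on with
  | _ ℓ ih =>
    intro w hc he
    rcases Nat.eq_zero_or_pos ℓ with h0 | hpos
    · simp [h0]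
    by_cases hinj : ∀ i j, i < ℓ → j < ℓ → w i = w j → i = j
    · exact hdiv w ℓ ⟨hpos, hc, he, hinj⟩
    push_neg at hinj
    obtain ⟨i0, j0, hi0, hj0, heq0, hne0⟩ := hinj
    have key : ∀ u v, u < v → v < ℓ → w u = w v → p ∣ ℓ := by
      intro u v huv hv heq
      have hu : u < ℓ := by omega
      -- inner closed walk of length v - u
      have hinner : p ∣ (v - u) := by
        apply ih (v - u) (by omega) (fun k => w (u + k))
        · show w (u + (v - u)) = w (u + 0)
          have h1 : u + (v - u) = v := by omega
          have h2 : u + 0 = u := by omega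
          rw [h1, h2]
          exact heq.symm
        · intro k hk
          show E (w (u + k)) (w (u + (k + 1)))
          have : u + (k + 1) = (u + k) + 1 := by omega
          rw [this]
          exact he (u + k) (by omega)
      -- outer closed walk of length ℓ - (v - u)
      have houter : p ∣ (ℓ - (v - u)) := by
        apply ih (ℓ - (v - u)) (by omega) (fun k => if k ≤ u then w k else w (k + (v - u)))
        · have h1 : ¬ (ℓ - (v - u) ≤ u) := by omega
          simp only [h1, if_neg, not_false_iff, Nat.zero_le, le_refl, if_pos]
          have : ℓ - (v - u) + (v - u) = ℓ := by omega
          rw [this, hc]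
        · intro k hk
          by_cases hk1 : k + 1 ≤ u
          · have hk0 : k ≤ u := by omega
            simp only [hk0, hk1, if_pos]
            exact he k (by omega)
          · by_cases hk2 : k ≤ u
            · have hke : k = u := by omega
              simp only [hk2, hk1, if_pos, if_neg, not_false_iff]
              have h4 : k + 1 + (v - u) = v + 1 := by omega
              rw [h4, hke, heq]
              exact he v (by omega)
            · have hk3 : ¬ (k + 1 ≤ u) := by omega
              simp only [hk2, hk3, if_neg, not_false_iff]
              have : k + 1 + (v - u) = (k + (v - u)) + 1 := by omega
              rw [this]
              exact he (k + (v - u)) (by omega)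
      have : ℓ = (v - u) + (ℓ - (v - u)) := by omega
      rw [this]
      exact Nat.dvd_add hinner houter
    rcases lt_or_gt_of_ne hne0 with hlt | hgt
    · exact key i0 j0 hlt hj0 heq0
    · exact key j0 i0 hgt hi0 heq0.symm

end AuxWalk

lemma frob_aux {S : Set ℕ} (h0 : (0:ℕ) ∈ S) (hadd : ∀ a ∈ S, ∀ b ∈ S, a + b ∈ S)
    {p a b : ℕ} (hp : 0 < p) (hab : a = b + p) (ha : a ∈ S) (hb : b ∈ S)
    (hdvd : ∀ s ∈ S, p ∣ s) :
    ∀ t, p ∣ t → a * a ≤ t → t ∈ S := by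
  have hmul : ∀ (m : ℕ), ∀ c ∈ S, m * c ∈ S := by
    intro m
    induction m with
    | zero => intro c _; simpa using h0
    | succ m ih =>
      intro c hc
      have : (m + 1) * c = m * c + c := by ring
      rw [this]
      exact hadd _ (ih c hc) _ hc
  have hpa : p ∣ a := hab ▸ Nat.dvd_add (hdvd b hb) dvd_rfl
  obtain ⟨h, hah⟩ := hpa
  have hapos : 0 < a := by omega
  have hh : 0 < h := by
    rcases Nat.eq_zero_or_pos h with h0' | h0'
    · subst h0'; omega
    · exact h0'
  have hx : ∀ r ≤ h, h * b + r * p ∈ S := by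
    intro r hr
    obtain ⟨k, rfl⟩ : ∃ k, h = r + k := ⟨h - r, by omega⟩
    have heq : (r + k) * b + r * p = r * a + k * b := by rw [hab]; ring
    rw [heq]
    exact hadd _ (hmul r a ha) _ (hmul k b hb)
  intro t hpt hta
  have hhb : p ∣ h * b := Dvd.dvd.mul_left (hdvd b hb) h
  have hble : h * b ≤ t := by
    calc h * b ≤ h * b + h * p := by omega
    _ = h * a := by rw [hab]; ring
    _ ≤ a * a := by
        have : h ≤ a := by
          calc h ≤ p * h := Nat.le_mul_of_pos_left h hp
          _ = a := hah.symm
        exact Nat.mul_le_mul_right a this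
    _ ≤ t := hta
  obtain ⟨q, hq⟩ := Nat.dvd_sub hpt hhb
  have ht' : t = h * b + p * q := by omega
  obtain ⟨r, m, hrh, hm⟩ : ∃ r m, r < h ∧ q = h * m + r :=
    ⟨q % h, q / h, Nat.mod_lt q hh, by rw [Nat.div_add_mod]⟩
  have ht2 : t = (h * b + r * p) + m * a := by
    rw [ht', hm, hah]; ring
  rw [ht2]
  exact hadd _ (hx r (le_of_lt hrh)) _ (hmul m _ ha)

lemma exists_sub' {S : Set ℕ} (hadd : ∀ a ∈ S, ∀ b ∈ S, a + b ∈ S) (h0 : (0:ℕ) ∈ S)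
    {p : ℕ} (hp : 0 < p) (hdvd : ∀ s ∈ S, p ∣ s)
    (hgc : ∀ g : ℕ, (∀ s ∈ S, g ∣ s) → g ∣ p) :
    ∃ a b, a ∈ S ∧ b ∈ S ∧ a = b + p := by
  classical
  set H : AddSubgroup ℤ := AddSubgroup.closure ((fun m : ℕ => (m : ℤ)) '' S) with hH
  have hdiff : ∀ z ∈ H, ∃ a b, a ∈ S ∧ b ∈ S ∧ z = (a : ℤ) - b := by
    intro z hz
    refine AddSubgroup.closure_induction ?_ ?_ ?_ ?_ hz
    · rintro x ⟨m, hm, rfl⟩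
      exact ⟨m, 0, hm, h0, by simp⟩
    · exact ⟨0, 0, h0, h0, by simp⟩
    · rintro x y hx hy ⟨a, b, ha, hb, rfl⟩ ⟨c, d, hc, hd, rfl⟩
      exact ⟨a + c, b + d, hadd a ha c hc, hadd b hb d hd, by push_cast; ring⟩
    · rintro x hx ⟨a, b, ha, hb, rfl⟩
      exact ⟨b, a, hb, ha, by ring⟩
  obtain ⟨g, hgH⟩ := Int.subgroup_cyclic H
  have hgmem : g ∈ H := by
    rw [hgH]
    exact AddSubgroup.subset_closure rfl
  obtain ⟨a, b, haS, hbS, hgab⟩ := hdiff g hgmem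
  have hgdvd : ∀ s ∈ S, g.natAbs ∣ s := by
    intro s hs
    have hsH : (s : ℤ) ∈ H := AddSubgroup.subset_closure ⟨s, hs, rfl⟩
    rw [hgH, AddSubgroup.mem_closure_singleton] at hsH
    obtain ⟨m, hm⟩ := hsH
    rw [zsmul_eq_mul] at hm
    have : g ∣ (s : ℤ) := Dvd.intro_left m hm
    rw [← Int.natAbs_dvd_natAbs] at this
    simpa using this
  have h1 : g.natAbs ∣ p := hgc _ hgdvd
  have h2 : p ∣ g.natAbs := by
    have hpz : ∀ z ∈ H, (p : ℤ) ∣ z := by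
      intro z hz
      refine AddSubgroup.closure_induction ?_ ?_ ?_ ?_ hz
      · rintro x ⟨m, hm, rfl⟩
        exact Int.natCast_dvd_natCast.mpr (hdvd m hm)
      · exact dvd_zero _
      · exact fun x y _ _ hx hy => dvd_add hx hy
      · exact fun x _ hx => dvd_neg.mpr hx
    have := hpz g hgmem
    rw [← Int.natAbs_dvd_natAbs] at this
    simpa using this
  have hgp : g.natAbs = p := Nat.dvd_antisymm h1 h2
  rcases Int.natAbs_eq g with hge | hge
  · refine ⟨a, b, haS, hbS, ?_⟩
    have : (a : ℤ) = b + p := by rw [← hgp, ← hge]; omega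
    exact_mod_cast this
  · refine ⟨b, a, hbS, haS, ?_⟩
    have : (b : ℤ) = a + p := by
      have : g = -(p : ℤ) := by rw [← hgp]; exact hge
      omega
    exact_mod_cast this

lemma rotate_comp {p : ℕ} (s : Fin p → Bool) (a b : ℕ) :
    rotate (rotate s a) b = rotate s (b + a) := by
  funext k
  show s ⟨((((k:ℕ) + b) % p) + a) % p, _⟩ = s ⟨((k:ℕ) + (b + a)) % p, _⟩
  congr 1
  apply Fin.ext
  show (((k:ℕ) + b) % p + a) % p = ((k:ℕ) + (b + a)) % p
  rw [Nat.mod_add_mod, Nat.add_assoc]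

lemma rotate_modeq {p : ℕ} (s : Fin p → Bool) {a b : ℕ} (h : a % p = b % p) :
    rotate s a = rotate s b := by
  funext k
  show s ⟨((k:ℕ) + a) % p, _⟩ = s ⟨((k:ℕ) + b) % p, _⟩
  congr 1
  apply Fin.ext
  show ((k:ℕ) + a) % p = ((k:ℕ) + b) % p
  exact Nat.ModEq.add_left _ h

lemma rotate_zero {p : ℕ} (s : Fin p → Bool) : rotate s 0 = s := by
  funext k
  show s ⟨((k:ℕ) + 0) % p, _⟩ = s k
  congr 1
  apply Fin.ext
  show ((k:ℕ) + 0) % p = (k:ℕ)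
  rw [Nat.add_zero, Nat.mod_eq_of_lt k.isLt]

lemma step_mod {p X Y : ℕ} (hp : 0 < p) (h : (X + 1) % p = Y % p) :
    X % p = (Y % p + (p - 1)) % p := by
  have h2 : (X + 1 + (p - 1)) % p = (Y + (p - 1)) % p := Nat.ModEq.add_right (p - 1) h
  have h3 : X + 1 + (p - 1) = X + p := by omega
  rw [h3] at h2
  rw [← Nat.add_mod_right X p, h2, Nat.mod_add_mod]

lemma mod_eq_of_dvd_add_sub {p X k : ℕ} (hp : 0 < p) (hk : k < p)
    (h : p ∣ X + (p - k)) : X % p = k := by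
  obtain ⟨c, hc⟩ := h
  have hc0 : c ≠ 0 := by
    intro h0
    rw [h0, Nat.mul_zero] at hc
    omega
  obtain ⟨c', rfl⟩ : ∃ c', c = c' + 1 := ⟨c - 1, by omega⟩
  have hexp : p * (c' + 1) = p * c' + p := by ring
  have hX : X = p * c' + k := by omega
  rw [hX, Nat.mul_add_mod, Nat.mod_eq_of_lt hk]

/-- There is a bijection between the periodic orbits of a conjunctive Boolean network
(with strongly connected dependency graph of loop number `p`) and the binary necklaces
of length `p`: a map `Φ` on states such that two periodic states are in the same orbit
iff their images are rotations of each other, every length-`p` string is (up to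
rotation) attained by a periodic state, and the period of each periodic orbit equals
the order of the corresponding necklace (its number of distinct rotations). -/
theorem orbits_biject_necklaces {n : ℕ} (N : Fin n → Finset (Fin n))
    (hne : ∀ i, (N i).Nonempty) (hsc : StronglyConnected (depEdge N))
    (p : ℕ) (hp : 0 < p)
    (hdiv : ∀ w ℓ, IsCycle (depEdge N) w ℓ → p ∣ ℓ)
    (hgcd : ∀ q, (∀ w ℓ, IsCycle (depEdge N) w ℓ → q ∣ ℓ) → q ∣ p) :
    ∃ Φ : (Fin n → Bool) → (Fin p → Bool),
      (∀ x y, (∃ m, 0 < m ∧ (cbn N)^[m] x = x) → (∃ m, 0 < m ∧ (cbn N)^[m] y = y) →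
        ((∃ k, (cbn N)^[k] x = y) ↔ ∃ r, Φ y = rotate (Φ x) r)) ∧
      (∀ s : Fin p → Bool,
        ∃ x, (∃ m, 0 < m ∧ (cbn N)^[m] x = x) ∧ ∃ r, s = rotate (Φ x) r) ∧
      (∀ x, (∃ m, 0 < m ∧ (cbn N)^[m] x = x) →
        Function.minimalPeriod (cbn N) x =
          (Finset.image (fun r : Fin p => rotate (Φ x) (r : ℕ)) Finset.univ).card) := by
  classical
  -- n is positive
  have hn : 0 < n := by
    by_contra hn0
    have hn0 : n = 0 := by omega
    have hvac : ∀ (w : ℕ → Fin n) (ℓ : ℕ), IsCycle (depEdge N) w ℓ → (p + 1) ∣ ℓ := by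
      intro w ℓ _
      exact absurd (w 0).isLt (by omega)
    have := hgcd (p + 1) hvac
    have := Nat.le_of_dvd hp this
    omega
  set v0 : Fin n := ⟨0, hn⟩ with hv0
  choose W L hWL using hsc
  have hclosed : ∀ ℓ (w : ℕ → Fin n) (a : Fin n),
      IsWalk (depEdge N) w ℓ a a → p ∣ ℓ := by
    intro ℓ w a h
    exact closed_walk_dvd hdiv ℓ w (h.2.1.trans h.1.symm) h.2.2
  have hcong : ∀ (a b : Fin n) (w : ℕ → Fin n) (ℓ : ℕ),
      IsWalk (depEdge N) w ℓ a b → (L v0 a + ℓ) % p = L v0 b % p := by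
    intro a b w ℓ hw
    obtain ⟨w1, hw1⟩ := walk_append (hWL v0 a) hw
    obtain ⟨w2, hw2⟩ := walk_append hw1 (hWL b v0)
    obtain ⟨w3, hw3⟩ := walk_append (hWL v0 b) (hWL b v0)
    have d1 : p ∣ L v0 a + ℓ + L b v0 := hclosed _ _ _ hw2
    have d2 : p ∣ L v0 b + L b v0 := hclosed _ _ _ hw3
    have e1 : L v0 a + ℓ + L b v0 ≡ 0 [MOD p] := (Nat.modEq_zero_iff_dvd).mpr d1
    have e2 : L v0 b + L b v0 ≡ 0 [MOD p] := (Nat.modEq_zero_iff_dvd).mpr d2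
    exact Nat.ModEq.add_right_cancel' (L b v0) (e1.trans e2.symm)
  have hLv0 : p ∣ L v0 v0 := hclosed _ _ _ (hWL v0 v0)
  -- the set of lengths of closed walks at v0
  set S : Set ℕ := {ℓ | ∃ w, IsWalk (depEdge N) w ℓ v0 v0} with hS
  have hS0 : (0 : ℕ) ∈ S := ⟨_, walk_const v0⟩
  have hSadd : ∀ a ∈ S, ∀ b ∈ S, a + b ∈ S := by
    rintro a ⟨wa, hwa⟩ b ⟨wb, hwb⟩
    exact walk_append hwa hwb
  have hSdvd : ∀ s ∈ S, p ∣ s := by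
    rintro s ⟨w, hw⟩
    exact hclosed _ _ _ hw
  have hSg : ∀ g : ℕ, (∀ s ∈ S, g ∣ s) → g ∣ p := by
    intro g hg
    apply hgcd
    intro w ℓ hcyc
    have hwalk : IsWalk (depEdge N) w ℓ (w 0) (w 0) := ⟨rfl, hcyc.2.1, hcyc.2.2.1⟩
    obtain ⟨w1, hw1⟩ := walk_append (hWL v0 (w 0)) hwalk
    obtain ⟨w2, hw2⟩ := walk_append hw1 (hWL (w 0) v0)
    obtain ⟨w3, hw3⟩ := walk_append (hWL v0 (w 0)) (hWL (w 0) v0)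
    have d1 : g ∣ L v0 (w 0) + ℓ + L (w 0) v0 := hg _ ⟨w2, hw2⟩
    have d2 : g ∣ L v0 (w 0) + L (w 0) v0 := hg _ ⟨w3, hw3⟩
    have heq : L v0 (w 0) + ℓ + L (w 0) v0 = ℓ + (L v0 (w 0) + L (w 0) v0) := by ring
    rw [heq] at d1
    have := Nat.dvd_sub d1 d2
    rwa [Nat.add_sub_cancel] at this
  obtain ⟨a, b, haS, hbS, hab⟩ := exists_sub' hSadd hS0 hp hSdvd hSg
  have hfrob : ∀ t, p ∣ t → a * a ≤ t → t ∈ S :=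
    frob_aux hS0 hSadd hp hab haS hbS hSdvd
  -- uniform bound for exact-length walks
  set A : ℕ := (Finset.univ.sup (fun i : Fin n => L i v0)) +
      (Finset.univ.sup (fun j : Fin n => L v0 j)) with hA
  set T : ℕ := a * a + A with hT
  have hwalkex : ∀ t, T ≤ t → ∀ i j : Fin n,
      (L v0 i + t) % p = L v0 j % p → ∃ w, IsWalk (depEdge N) w t i j := by
    intro t ht i j hcnd
    have h1 : L i v0 ≤ Finset.univ.sup (fun i : Fin n => L i v0) :=
      Finset.le_sup (f := fun i : Fin n => L i v0) (Finset.mem_univ i)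
    have h2 : L v0 j ≤ Finset.univ.sup (fun j : Fin n => L v0 j) :=
      Finset.le_sup (f := fun j : Fin n => L v0 j) (Finset.mem_univ j)
    set k : ℕ := t - L i v0 - L v0 j with hk
    have hk1 : a * a ≤ k := by omega
    have hkt : t = L i v0 + (k + L v0 j) := by omega
    -- p ∣ k
    have c1 : (L v0 i + L i v0) % p = L v0 v0 % p := hcong i v0 _ _ (hWL i v0)
    have m1 : L v0 i + L i v0 ≡ 0 [MOD p] :=
      c1.trans ((Nat.modEq_zero_iff_dvd).mpr hLv0)
    have m2 : L v0 i + t ≡ L v0 j [MOD p] := hcnd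
    have m3 : L v0 i + t = (L v0 i + L i v0) + (k + L v0 j) := by omega
    have m5 : k + L v0 j ≡ L v0 j [MOD p] := by
      have m4 : (L v0 i + L i v0) + (k + L v0 j) ≡ L v0 j [MOD p] := by
        rw [← m3]; exact m2
      have := (m1.add_right (k + L v0 j)).symm.trans m4
      simpa using this
    have m6 : k ≡ 0 [MOD p] := by
      have m5' : k + L v0 j ≡ 0 + L v0 j [MOD p] := by rwa [Nat.zero_add]
      exact Nat.ModEq.add_right_cancel' (L v0 j) m5' 
    have hpk : p ∣ k := (Nat.modEq_zero_iff_dvd).mp m6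
    obtain ⟨wm, hwm⟩ := hfrob k hpk hk1
    obtain ⟨u1, hu1⟩ := walk_append hwm (hWL v0 j)
    obtain ⟨u2, hu2⟩ := walk_append (hWL i v0) hu1
    refine ⟨u2, ?_⟩
    rwa [← hkt] at hu2
  -- the sets of sources of length-t walks into i
  set Wt : ℕ → Fin n → Finset (Fin n) :=
    fun t i => Finset.univ.filter (fun j => ∃ w, IsWalk (depEdge N) w t j i) with hWtdef
  have hWt0 : ∀ i, Wt 0 i = {i} := by
    intro i
    ext j
    simp only [hWtdef, Finset.mem_filter, Finset.mem_univ, true_and, Finset.mem_singleton]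
    constructor
    · rintro ⟨w, h0, h1, _⟩
      rw [← h0, h1]
    · rintro rfl
      exact ⟨_, walk_const j⟩
  have hWts : ∀ t i, Wt (t + 1) i = (Wt t i).biUnion N := by
    intro t i
    ext k
    simp only [hWtdef, Finset.mem_filter, Finset.mem_univ, true_and, Finset.mem_biUnion]
    constructor
    · rintro ⟨w, hw⟩
      obtain ⟨hE, hw'⟩ := walk_unprepend hw
      exact ⟨w 1, ⟨_, hw'⟩, hE⟩
    · rintro ⟨j, ⟨w, hw⟩, hkj⟩
      exact walk_prepend hkj hw
  have hiter : ∀ t (x : Fin n → Bool) (i : Fin n), (cbn N)^[t] x i = (Wt t i).inf x := by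
    intro t
    induction t with
    | zero =>
      intro x i
      rw [hWt0]
      simp
    | succ t ih =>
      intro x i
      rw [Function.iterate_succ_apply, ih (cbn N x) i]
      have : (Wt t i).inf (cbn N x) = (Wt t i).inf (fun j => (N j).inf x) := rfl
      rw [this, ← Finset.inf_biUnion, ← hWts]
  -- every residue class mod p is realized
  have hUkne : ∀ k : ℕ, k < p → ∃ i : Fin n, L v0 i % p = k := by
    intro k hk
    obtain ⟨bsq, hb0, hbs⟩ : ∃ bsq : ℕ → Fin n, bsq 0 = v0 ∧ ∀ t, bsq (t + 1) ∈ N (bsq t) :=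
      ⟨fun t => Nat.rec v0 (fun _ prev => (hne prev).choose) t, rfl,
        fun t => (hne _).choose_spec⟩
    have hbw : ∀ t, IsWalk (depEdge N) (fun m => bsq (t - m)) t (bsq t) v0 := by
      intro t
      refine ⟨rfl, ?_, ?_⟩
      · show bsq (t - t) = v0
        rw [Nat.sub_self, hb0]
      intro m hm
      show bsq (t - m) ∈ N (bsq (t - (m + 1)))
      have : t - m = (t - (m + 1)) + 1 := by omega
      rw [this]
      exact hbs _
    set t : ℕ := L v0 v0 + (p - k) with htdef
    have hc := hcong (bsq t) v0 _ t (hbw t)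
    set X : ℕ := L v0 (bsq t) with hX
    have d1 : p ∣ X + t := by
      apply Nat.dvd_of_mod_eq_zero
      rw [hc]
      obtain ⟨c, hc'⟩ := hLv0
      rw [hc', Nat.mul_mod_right]
    have heqt : X + t = (X + (p - k)) + L v0 v0 := by omega
    have d2 : p ∣ X + (p - k) := by
      have := Nat.dvd_sub (heqt ▸ d1) hLv0
      rwa [Nat.add_sub_cancel] at this
    exact ⟨bsq t, mod_eq_of_dvd_add_sub hp hk d2⟩
    -- stabilization of Wt
  have hWtT : ∀ t, T ≤ t → ∀ i, Wt t i =
      Finset.univ.filter (fun j => (L v0 j + t) % p = L v0 i % p) := by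
    intro t ht i
    ext j
    simp only [hWtdef, Finset.mem_filter, Finset.mem_univ, true_and]
    constructor
    · rintro ⟨w, hw⟩
      exact hcong j i w t hw
    · intro hcnd
      exact hwalkex t ht j i hcnd
  have hpershift : ∀ t, T ≤ t → ∀ (x : Fin n → Bool), (cbn N)^[t + p] x = (cbn N)^[t] x := by
    intro t ht x
    funext i
    rw [hiter, hiter, hWtT t ht, hWtT (t + p) (by omega)]
    congr 1
    apply Finset.filter_congr
    intro j _
    have : L v0 j + (t + p) = (L v0 j + t) + p := by omega
    rw [this, Nat.add_mod_right]
  -- periodic points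
  set P : (Fin n → Bool) → Prop := fun x => ∃ m, 0 < m ∧ (cbn N)^[m] x = x with hPdef
  have hmultfix : ∀ (x : Fin n → Bool) (m : ℕ), (cbn N)^[m] x = x →
      ∀ s, (cbn N)^[m * s] x = x := by
    intro x m hx s
    induction s with
    | zero => rw [Nat.mul_zero]; rfl
    | succ s ih =>
      have : m * (s + 1) = m * s + m := by ring
      rw [this, Function.iterate_add_apply, hx, ih]
  have hfixp : ∀ x, P x → (cbn N)^[p] x = x := by
    rintro x ⟨m, hm, hx⟩
    set q : ℕ := m * (T + 1) with hq
    have hqT : T < q := by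
      have : T + 1 ≤ m * (T + 1) := Nat.le_mul_of_pos_left (T + 1) hm
      omega
    have hqx : (cbn N)^[q] x = x := hmultfix x m hx (T + 1)
    calc (cbn N)^[p] x = (cbn N)^[p] ((cbn N)^[q] x) := by rw [hqx]
      _ = (cbn N)^[p + q] x := (Function.iterate_add_apply _ p q x).symm
      _ = (cbn N)^[q + p] x := by rw [Nat.add_comm]
      _ = (cbn N)^[q] x := hpershift q (by omega) x
      _ = x := hqx
  -- the necklace map
  set Phi : (Fin n → Bool) → Fin p → Bool :=
    fun x k => (Finset.univ.filter (fun j => L v0 j % p = (k : ℕ))).inf x with hPhidef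
  have hP1 : ∀ x, P x → ∀ i, x i = Phi x ⟨L v0 i % p, Nat.mod_lt _ hp⟩ := by
    intro x hx i
    set q : ℕ := p * (T + 1) with hq
    have hqT : T < q := by
      have : T + 1 ≤ p * (T + 1) := Nat.le_mul_of_pos_left (T + 1) hp
      omega
    have hqx : (cbn N)^[q] x = x := hmultfix x p (hfixp x hx) (T + 1)
    have h1 : x i = (Wt q i).inf x := by
      conv_lhs => rw [← hqx]
      exact hiter q x i
    rw [h1, hWtT q (by omega) i]
    show _ = (Finset.univ.filter (fun j => L v0 j % p = ((⟨L v0 i % p, Nat.mod_lt _ hp⟩ : Fin p) : ℕ))).inf x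
    congr 1
    apply Finset.filter_congr
    intro j _
    have hqq : (L v0 j + q) % p = L v0 j % p := by rw [hq, Nat.add_mul_mod_self_left]
    rw [hqq]
  have hinj : ∀ x y, P x → P y → Phi x = Phi y → x = y := by
    intro x y hx hy hxy
    funext i
    rw [hP1 x hx i, hP1 y hy i, hxy]
  have hPiter : ∀ x, P x → ∀ k, P ((cbn N)^[k] x) := by
    rintro x ⟨m, hm, hx⟩ k
    refine ⟨m, hm, ?_⟩
    rw [← Function.iterate_add_apply, Nat.add_comm, Function.iterate_add_apply, hx]
  have hedge_mod : ∀ (i j : Fin n), j ∈ N i →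
      L v0 j % p = ((L v0 i % p) + (p - 1)) % p := by
    intro i j hj
    have hw := walk_single (E := depEdge N) hj
    have := hcong j i _ 1 hw
    exact step_mod hp this
  have hPf : ∀ x, P x → P (cbn N x) := by
    intro x hx
    have := hPiter x hx 1
    rwa [Function.iterate_one] at this
  have hshift : ∀ x, P x → Phi (cbn N x) = rotate (Phi x) (p - 1) := by
    intro x hx
    funext k
    obtain ⟨i, hi⟩ := hUkne (k : ℕ) k.isLt
    have hPfx : P (cbn N x) := hPf x hx
    have h1 : cbn N x i = Phi (cbn N x) k := by
      have := hP1 (cbn N x) hPfx i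
      rwa [show (⟨L v0 i % p, Nat.mod_lt _ hp⟩ : Fin p) = k from Fin.ext hi] at this
    have h2 : cbn N x i = Phi x ⟨((k : ℕ) + (p - 1)) % p, Nat.mod_lt _ hp⟩ := by
      show (N i).inf x = _
      have hconst : ∀ j ∈ N i, x j = Phi x ⟨((k : ℕ) + (p - 1)) % p, Nat.mod_lt _ hp⟩ := by
        intro j hj
        rw [hP1 x hx j]
        congr 1
        apply Fin.ext
        show L v0 j % p = ((k : ℕ) + (p - 1)) % p
        rw [hedge_mod i j hj, hi]
      rw [Finset.inf_congr rfl hconst, Finset.inf_const (hne i)]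
    rw [← h1, h2]
    rfl
  have hPhiIter : ∀ x, P x → ∀ t, Phi ((cbn N)^[t] x) = rotate (Phi x) (t * (p - 1)) := by
    intro x hx t
    induction t with
    | zero =>
      rw [Nat.zero_mul, rotate_zero]
      rfl
    | succ t ih =>
      rw [Function.iterate_succ_apply', hshift _ (hPiter x hx t), ih, rotate_comp]
      apply rotate_modeq
      congr 1
      ring
  refine ⟨Phi, ?_, ?_, ?_⟩
  -- Goal 1: same orbit iff rotations of each other
  · intro x y hx hy
    constructor
    · rintro ⟨k, rfl⟩
      exact ⟨k * (p - 1), hPhiIter x hx k⟩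
    · rintro ⟨r, hr⟩
      have hmodsq : (r * (p - 1) * (p - 1)) % p = r % p := by
        rcases Nat.lt_or_ge p 2 with h2 | h2
        · have hp1 : p = 1 := by omega
          rw [hp1]
          simp [Nat.mod_one]
        · have hm2 : p = (p - 2) + 2 := by omega
          rw [hm2]
          have hkey : r * ((p - 2) + 2 - 1) * ((p - 2) + 2 - 1) =
              r + (r * (p - 2)) * ((p - 2) + 2) := by
            have h21 : (p - 2) + 2 - 1 = (p - 2) + 1 := by omega
            rw [h21]; ring
          rw [hkey, Nat.add_mul_mod_self_right]
      have key : Phi ((cbn N)^[r * (p - 1)] x) = Phi y := by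
        rw [hPhiIter x hx (r * (p - 1)), hr]
        exact rotate_modeq (Phi x) hmodsq
      exact ⟨r * (p - 1), hinj _ _ (hPiter x hx _) hy key⟩
  -- Goal 2: surjectivity onto necklaces
  · intro s
    set g : (Fin p → Bool) → (Fin n → Bool) :=
      fun s' i => s' ⟨L v0 i % p, Nat.mod_lt _ hp⟩ with hgdef
    have hgstep : ∀ s', cbn N (g s') = g (rotate s' (p - 1)) := by
      intro s'
      funext i
      show (N i).inf (g s') = rotate s' (p - 1) ⟨L v0 i % p, Nat.mod_lt _ hp⟩
      have hconst : ∀ j ∈ N i,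
          g s' j = s' ⟨(L v0 i % p + (p - 1)) % p, Nat.mod_lt _ hp⟩ := by
        intro j hj
        show s' ⟨L v0 j % p, Nat.mod_lt _ hp⟩ = _
        congr 1
        exact Fin.ext (hedge_mod i j hj)
      rw [Finset.inf_congr rfl hconst, Finset.inf_const (hne i)]
      rfl
    have hgiter : ∀ t s', (cbn N)^[t] (g s') = g (rotate s' (t * (p - 1))) := by
      intro t
      induction t with
      | zero =>
        intro s'
        rw [Nat.zero_mul, rotate_zero]
        rfl
      | succ t ih =>
        intro s'
        rw [Function.iterate_succ_apply, hgstep s', ih (rotate s' (p - 1)), rotate_comp]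
        have : t * (p - 1) + (p - 1) = (t + 1) * (p - 1) := by ring
        rw [this]
    have hPx : P (g s) := by
      refine ⟨p, hp, ?_⟩
      rw [hgiter p s]
      have h0 : rotate s (p * (p - 1)) = s := by
        have he : (p * (p - 1)) % p = 0 % p := by
          rw [Nat.mul_mod_right, Nat.zero_mod]
        rw [rotate_modeq s he, rotate_zero]
      rw [h0]
    have hPhig : Phi (g s) = s := by
      funext k
      obtain ⟨i0, hi0⟩ := hUkne (k : ℕ) k.isLt
      show (Finset.univ.filter (fun j => L v0 j % p = (k : ℕ))).inf (g s) = s k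
      have hconst : ∀ j ∈ Finset.univ.filter (fun j => L v0 j % p = (k : ℕ)),
          g s j = s k := by
        intro j hj
        rw [Finset.mem_filter] at hj
        show s ⟨L v0 j % p, Nat.mod_lt _ hp⟩ = s k
        congr 1
        exact Fin.ext hj.2
      have hnef : (Finset.univ.filter (fun j => L v0 j % p = (k : ℕ))).Nonempty :=
        ⟨i0, Finset.mem_filter.mpr ⟨Finset.mem_univ _, hi0⟩⟩
      rw [Finset.inf_congr rfl hconst, Finset.inf_const hnef]
    exact ⟨g s, hPx, 0, by rw [hPhig, rotate_zero]⟩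
  -- Goal 3: period equals order of the necklace
  · intro x hx
    set s : Fin p → Bool := Phi x with hsdef
    have hmA : ∀ m, (cbn N)^[m] x = x ↔ rotate s (m * (p - 1)) = s := by
      intro m
      constructor
      · intro h
        have h2 := hPhiIter x hx m
        rw [h] at h2
        exact h2.symm
      · intro h
        apply hinj _ _ (hPiter x hx m) hx
        rw [hPhiIter x hx m]
        exact h
    have hAp : rotate s p = s := by
      have h0 : p % p = 0 % p := by rw [Nat.mod_self, Nat.zero_mod]
      rw [rotate_modeq s h0, rotate_zero]
    have dex : ∃ d, 0 < d ∧ rotate s d = s := ⟨p, hp, hAp⟩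
    set d : ℕ := Nat.find dex with hddef
    obtain ⟨hd0, hdrot⟩ := Nat.find_spec dex
    have hAmul : ∀ q, rotate s (d * q) = s := by
      intro q
      induction q with
      | zero => rw [Nat.mul_zero, rotate_zero]
      | succ q ih =>
        have h1 : d * (q + 1) = d * q + d := by ring
        have h2 : rotate (rotate s d) (d * q) = rotate s (d * q + d) :=
          rotate_comp s d (d * q)
        rw [h1, ← h2, hdrot, ih]
    have hred : ∀ r, rotate s r = rotate s (r % d) := by
      intro r
      have h1 : rotate (rotate s (d * (r / d))) (r % d) = rotate s (r % d + d * (r / d)) :=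
        rotate_comp s (d * (r / d)) (r % d)
      rw [hAmul] at h1
      conv_lhs => rw [← Nat.mod_add_div r d]
      exact h1.symm
    have hdd : ∀ r, rotate s r = s ↔ d ∣ r := by
      intro r
      constructor
      · intro h
        have h2 : rotate s (r % d) = s := by rw [← hred r]; exact h
        rcases Nat.eq_zero_or_pos (r % d) with h3 | h3
        · exact Nat.dvd_of_mod_eq_zero h3
        · exact absurd ⟨h3, h2⟩ (Nat.find_min dex (Nat.mod_lt r hd0))
      · rintro ⟨q, rfl⟩
        exact hAmul q
    obtain ⟨m, hm0, hmx⟩ := hx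
    have hx' : P x := ⟨m, hm0, hmx⟩
    have hper : Function.IsPeriodicPt (cbn N) m x := hmx
    have hmstar_per : (cbn N)^[Function.minimalPeriod (cbn N) x] x = x :=
      Function.isPeriodicPt_minimalPeriod (cbn N) x
    have hmstar_pos : 0 < Function.minimalPeriod (cbn N) x :=
      Function.IsPeriodicPt.minimalPeriod_pos hm0 hper
    have hd_p : d ∣ p := (hdd p).mp hAp
    have hco : Nat.Coprime d (p - 1) := by
      have h1 : Nat.Coprime ((p - 1) + 1) (p - 1) := by
        show Nat.gcd ((p - 1) + 1) (p - 1) = 1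
        rw [Nat.add_comm, Nat.gcd_add_self_left, Nat.gcd_one_left]
      rw [show p - 1 + 1 = p from by omega] at h1
      exact Nat.Coprime.coprime_dvd_left hd_p h1
    have hd_m : d ∣ Function.minimalPeriod (cbn N) x := by
      have h1 := (hdd _).mp ((hmA _).mp hmstar_per)
      exact hco.dvd_of_dvd_mul_right h1
    have hfd : (cbn N)^[d] x = x := (hmA d).mpr ((hdd _).mpr (dvd_mul_right d (p - 1)))
    have hd_le : d ≤ Function.minimalPeriod (cbn N) x := Nat.le_of_dvd hmstar_pos hd_m
    have hm_le : Function.minimalPeriod (cbn N) x ≤ d :=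
      Function.IsPeriodicPt.minimalPeriod_le hd0 hfd
    have hm_eq : Function.minimalPeriod (cbn N) x = d := le_antisymm hm_le hd_le
    have hcanc : ∀ r r', r ≤ r' → rotate s r = rotate s r' → rotate s (r' - r) = s := by
      intro r r' hrr h
      have e1 : rotate (rotate s r) (r * (p - 1)) = rotate s (r * (p - 1) + r) :=
        rotate_comp s r (r * (p - 1))
      have e2 : rotate (rotate s r') (r * (p - 1)) = rotate s (r * (p - 1) + r') :=
        rotate_comp s r' (r * (p - 1))
      have hrp : r * (p - 1) + r = r * p := by
        have hh : (p - 1) + 1 = p := by omega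
        calc r * (p - 1) + r = r * ((p - 1) + 1) := by ring
        _ = r * p := by rw [hh]
      have h3 : rotate s (r * p) = rotate s (r * (p - 1) + r') := by
        rw [← hrp, ← e1, ← e2, h]
      have h4 : (r * p) % p = 0 := Nat.mul_mod_left r p
      have h5 : (r * (p - 1) + r') % p = (r' - r) % p := by
        have hq : r * (p - 1) + r' = (r' - r) + r * p := by omega
        rw [hq, Nat.add_mul_mod_self_right]
      have e3 : rotate s (r' - r) = rotate s (r * (p - 1) + r') := rotate_modeq s h5.symm
      rw [e3, ← h3, rotate_modeq s (show (r * p) % p = 0 % p by rw [h4, Nat.zero_mod]),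
        rotate_zero]
    rw [hm_eq]
    have himg : Finset.image (fun r : Fin p => rotate s (r : ℕ)) Finset.univ =
        Finset.image (fun r => rotate s r) (Finset.range d) := by
      ext u
      simp only [Finset.mem_image, Finset.mem_univ, true_and, Finset.mem_range]
      constructor
      · rintro ⟨r, rfl⟩
        exact ⟨(r : ℕ) % d, Nat.mod_lt _ hd0, (hred (r : ℕ)).symm⟩
      · rintro ⟨r, hr, rfl⟩
        have hrp : r < p := lt_of_lt_of_le hr (Nat.le_of_dvd hp hd_p)
        exact ⟨⟨r, hrp⟩, rfl⟩
    have hinjOn : Set.InjOn (fun r => rotate s r) (Finset.range d : Set ℕ) := by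
      intro r hr r' hr' h
      simp only [Finset.coe_range, Set.mem_Iio] at hr hr'
      rcases le_total r r' with hle | hle
      · rcases Nat.eq_zero_or_pos (r' - r) with h0 | h0
        · omega
        · have hge := Nat.le_of_dvd h0 ((hdd _).mp (hcanc r r' hle h))
          omega
      · rcases Nat.eq_zero_or_pos (r - r') with h0 | h0
        · omega
        · have hge := Nat.le_of_dvd h0 ((hdd _).mp (hcanc r' r hle h.symm))
          omega
    rw [himg, Finset.card_image_of_injOn hinjOn, Finset.card_range]
end

section
/- A positive integer p is the period of some periodic orbit of a conjunctive Boolean network with strongly connected dependency graph D if and only if p divides the length of every cycle of D (equivalently, p divides the loop number p*). -/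
/-!
Unfolding the network, `(cbn N)^[t] x i` is the conjunction of the `x j` over all `j` joined
to `i` by a walk of length `t`. On a periodic orbit this makes the length of every closed walk
through `i` a period of the coordinate `i`, and by strong connectivity every cycle length is
then a period of `x`. Conversely, if `p` divides every cycle length it divides every closed
walk length, so lengths of walks from a base vertex define a potential `d : Fin n → ZMod p`;
the indicator of `d = 0` is carried to the indicator of `d = t` after `t` steps, and so has
minimal period `p`.
-/

open Function

def HasWalk {V : Type*} (E : V → V → Prop) (ℓ : ℕ) (a b : V) : Prop :=
  ∃ w, IsWalk E w ℓ a b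

section Walks

variable {V : Type*} {E : V → V → Prop}

theorem hasWalk_zero_iff {a b : V} : HasWalk E 0 a b ↔ a = b := by
  constructor
  · rintro ⟨w, h0, h1, -⟩
    exact h0.symm.trans h1
  · rintro rfl
    exact ⟨fun _ => a, rfl, rfl, fun i hi => absurd hi i.not_lt_zero⟩

theorem hasWalk_succ_iff {t : ℕ} {a b : V} :
    HasWalk E (t + 1) a b ↔ ∃ c, HasWalk E t a c ∧ E c b := by
  constructor
  · rintro ⟨w, h0, ht, he⟩
    exact ⟨w t, ⟨w, h0, rfl, fun i hi => he i (by omega)⟩, ht ▸ he t (by omega)⟩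
  · rintro ⟨c, ⟨w, h0, ht, he⟩, hcb⟩
    refine ⟨update w (t + 1) b, by simp [h0], by simp, fun i hi => ?_⟩
    rcases Nat.lt_succ_iff_lt_or_eq.mp hi with hi | rfl
    · simpa [update_apply, hi.ne, (Nat.lt_succ_of_lt hi).ne] using he i hi
    · simpa [update_apply, ht] using hcb

theorem HasWalk.trans {ℓ₁ ℓ₂ : ℕ} {a b c : V} (h₁ : HasWalk E ℓ₁ a b) (h₂ : HasWalk E ℓ₂ b c) :
    HasWalk E (ℓ₁ + ℓ₂) a c := by
  induction ℓ₂ generalizing c with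
  | zero => rwa [← hasWalk_zero_iff.mp h₂]
  | succ ℓ₂ ih =>
    obtain ⟨d, hbd, hdc⟩ := hasWalk_succ_iff.mp h₂
    exact hasWalk_succ_iff.mpr ⟨d, ih hbd, hdc⟩

theorem HasWalk.mul_left {L : ℕ} {a : V} (h : HasWalk E L a a) (k : ℕ) :
    HasWalk E (k * L) a a := by
  induction k with
  | zero => simpa using hasWalk_zero_iff.mpr rfl
  | succ k ih => simpa [Nat.succ_mul] using ih.trans h

theorem IsWalk.hasWalk_segment {w : ℕ → V} {L i j : ℕ} {a b : V} (hw : IsWalk E w L a b)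
    (hij : i ≤ j) (hjL : j ≤ L) : HasWalk E (j - i) (w i) (w j) :=
  ⟨fun k => w (i + k), rfl, by simp [Nat.add_sub_cancel' hij],
    fun k hk => by simpa [add_assoc] using hw.2.2 (i + k) (by omega)⟩

theorem IsCycle.hasWalk {w : ℕ → V} {ℓ : ℕ} (h : IsCycle E w ℓ) : HasWalk E ℓ (w 0) (w 0) :=
  ⟨w, rfl, h.2.1, h.2.2.1⟩

theorem StronglyConnected.exists_hasWalk (h : StronglyConnected E) (a b : V) :
    ∃ ℓ, HasWalk E ℓ a b := by
  obtain ⟨w, ℓ, hw⟩ := h a b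
  exact ⟨ℓ, w, hw⟩

theorem exists_hasWalk_to (h : ∀ b, ∃ a, E a b) (t : ℕ) (b : V) : ∃ a, HasWalk E t a b := by
  induction t generalizing b with
  | zero => exact ⟨b, hasWalk_zero_iff.mpr rfl⟩
  | succ t ih =>
    obtain ⟨c, hcb⟩ := h b
    obtain ⟨a, hac⟩ := ih c
    exact ⟨a, hasWalk_succ_iff.mpr ⟨c, hac, hcb⟩⟩

/-- A closed walk that is not a cycle revisits a vertex, and splits there into two shorter
closed walks. -/
theorem dvd_of_hasWalk_self {p : ℕ} (hcyc : ∀ w ℓ, IsCycle E w ℓ → p ∣ ℓ) {L : ℕ} {a : V}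
    (h : HasWalk E L a a) : p ∣ L := by
  induction L using Nat.strong_induction_on generalizing a with
  | _ L ih =>
  obtain ⟨w, h0, hL, he⟩ := h
  have hw : IsWalk E w L a a := ⟨h0, hL, he⟩
  by_cases hinj : ∀ i j, i < L → j < L → w i = w j → i = j
  · rcases L.eq_zero_or_pos with rfl | hpos
    · exact dvd_zero p
    · exact hcyc w L ⟨hpos, hL.trans h0.symm, he, hinj⟩
  push Not at hinj
  obtain ⟨i, j, hi, hj, hwij, hij⟩ := hinj
  wlog hlt : i < j generalizing i j
  · exact this j i hj hi hwij.symm hij.symm (by omega)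
  have inner : p ∣ j - i := ih _ (by omega) (hwij ▸ hw.hasWalk_segment hlt.le hj.le)
  have outer : p ∣ i + (L - j) := by
    have head := hw.hasWalk_segment (Nat.zero_le i) (by omega)
    have tail := hw.hasWalk_segment hj.le le_rfl
    rw [h0, Nat.sub_zero, hwij] at head
    rw [hL] at tail
    exact ih _ (by omega) (head.trans tail)
  simpa [show j - i + (i + (L - j)) = L by omega] using dvd_add inner outer

theorem exists_potential {p : ℕ} (hsc : StronglyConnected E)
    (hdvd : ∀ L a, HasWalk E L a a → p ∣ L) (v₀ : V) :
    ∃ d : V → ZMod p, d v₀ = 0 ∧ ∀ t a b, HasWalk E t a b → d a + t = d b := by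
  choose dist hdist using hsc.exists_hasWalk v₀
  refine ⟨fun b => dist b, ?_, fun t a b hab => ?_⟩
  · exact (ZMod.natCast_eq_zero_iff _ _).mpr (hdvd _ _ (hdist v₀))
  · obtain ⟨s, hs⟩ := hsc.exists_hasWalk b v₀
    have h₁ := (ZMod.natCast_eq_zero_iff _ _).mpr (hdvd _ _ (((hdist a).trans hab).trans hs))
    have h₂ := (ZMod.natCast_eq_zero_iff _ _).mpr (hdvd _ _ ((hdist b).trans hs))
    push_cast at h₁ h₂
    linear_combination h₁ - h₂

end Walks

section ConjunctiveNetwork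

variable {n : ℕ} (N : Fin n → Finset (Fin n))

theorem cbn_apply_eq_true_iff (x : Fin n → Bool) (i : Fin n) :
    cbn N x i = true ↔ ∀ j ∈ N i, x j = true :=
  Finset.inf_eq_top_iff _ _

theorem iterate_cbn_apply_eq_true_iff (t : ℕ) (x : Fin n → Bool) (i : Fin n) :
    (cbn N)^[t] x i = true ↔ ∀ j, HasWalk (depEdge N) t j i → x j = true := by
  induction t generalizing i with
  | zero => simp [hasWalk_zero_iff]
  | succ t ih =>
    simp only [iterate_succ_apply', cbn_apply_eq_true_iff, ih, hasWalk_succ_iff]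
    exact ⟨fun h j ⟨k, hjk, hki⟩ => h k hki j hjk, fun h k hki j hjk => h j ⟨k, hjk, hki⟩⟩

variable {N}

/-- Along a closed walk of length `L`, truth at `u` can only be lost every `L` steps, so on a
periodic orbit it is never lost. -/
theorem iterate_cbn_apply_of_hasWalk_self {x : Fin n → Bool} {q : ℕ}
    (hx : IsPeriodicPt (cbn N) q x) (hq : 0 < q) {L : ℕ} {u : Fin n}
    (hL : HasWalk (depEdge N) L u u) :
    (cbn N)^[L] x u = x u := by
  have back : ∀ k y, (cbn N)^[k * L] y u = true → y u = true := fun k y h =>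
    (iterate_cbn_apply_eq_true_iff N _ y u).mp h u (hL.mul_left k)
  refine Bool.eq_iff_iff.mpr ⟨back 1 x ∘ by simp, fun hxu => back (q - 1) _ ?_⟩
  rwa [← iterate_add_apply, ← Nat.succ_mul, Nat.succ_eq_add_one, Nat.sub_add_cancel hq,
    (hx.mul_const L).eq]

theorem isPeriodicPt_cbn_of_hasWalk_self (hsc : StronglyConnected (depEdge N))
    {x : Fin n → Bool} {q : ℕ} (hx : IsPeriodicPt (cbn N) q x) (hq : 0 < q)
    {ℓ : ℕ} {v : Fin n} (hℓ : HasWalk (depEdge N) ℓ v v) : IsPeriodicPt (cbn N) ℓ x := by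
  funext i
  obtain ⟨a, ha⟩ := hsc.exists_hasWalk v i
  obtain ⟨b, hb⟩ := hsc.exists_hasWalk i v
  calc (cbn N)^[ℓ] x i = (cbn N)^[b + a] ((cbn N)^[ℓ] x) i :=
        (iterate_cbn_apply_of_hasWalk_self (hx.apply_iterate ℓ) hq (hb.trans ha)).symm
    _ = (cbn N)^[b + ℓ + a] x i := by
        rw [← iterate_add_apply, Nat.add_right_comm]
    _ = x i := iterate_cbn_apply_of_hasWalk_self hx hq ((hb.trans hℓ).trans ha)

theorem iterate_cbn_indicator {p : ℕ} (hne : ∀ i, (N i).Nonempty) {d : Fin n → ZMod p}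
    (hd : ∀ t a b, HasWalk (depEdge N) t a b → d a + t = d b) (t : ℕ) (i : Fin n) :
    (cbn N)^[t] (fun j => decide (d j = 0)) i = decide (d i = t) := by
  refine Bool.eq_iff_iff.mpr ?_
  simp only [iterate_cbn_apply_eq_true_iff, decide_eq_true_eq]
  constructor
  · intro h
    obtain ⟨j, hj⟩ := exists_hasWalk_to hne t i
    rw [← hd t j i hj, h j hj, zero_add]
  · intro h j hj
    simpa [h] using hd t j i hj

theorem minimalPeriod_cbn_indicator {p : ℕ} (hne : ∀ i, (N i).Nonempty) {d : Fin n → ZMod p}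
    {v₀ : Fin n} (hd₀ : d v₀ = 0) (hd : ∀ t a b, HasWalk (depEdge N) t a b → d a + t = d b) :
    minimalPeriod (cbn N) (fun j => decide (d j = 0)) = p := by
  have hper : ∀ t, IsPeriodicPt (cbn N) t (fun j => decide (d j = 0)) ↔ p ∣ t := by
    intro t
    rw [← ZMod.natCast_eq_zero_iff]
    refine ⟨fun h => ?_, fun h => funext fun i => ?_⟩
    · simpa [iterate_cbn_indicator hne hd, hd₀, eq_comm] using congrFun h v₀
    · rw [iterate_cbn_indicator hne hd, h]
  exact Nat.dvd_right_iff_eq.mp fun t => by rw [← isPeriodicPt_iff_minimalPeriod_dvd, hper]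

end ConjunctiveNetwork

/-- A positive integer `p` is the period of some periodic orbit of a conjunctive
Boolean network with strongly connected dependency graph iff `p` divides the length
of every cycle of the dependency graph. -/
theorem period_iff_divides_cycles {n : ℕ} (N : Fin n → Finset (Fin n))
    (hne : ∀ i, (N i).Nonempty) (hsc : StronglyConnected (depEdge N))
    (hn : 0 < n) (p : ℕ) (hp : 0 < p) :
    (∃ x : Fin n → Bool, Function.minimalPeriod (cbn N) x = p) ↔
      ∀ w ℓ, IsCycle (depEdge N) w ℓ → p ∣ ℓ := by
  constructor
  · rintro ⟨x, rfl⟩ w ℓ hcyc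
    exact (isPeriodicPt_cbn_of_hasWalk_self hsc (isPeriodicPt_minimalPeriod _ x) hp
      hcyc.hasWalk).minimalPeriod_dvd
  · intro hcyc
    obtain ⟨d, hd₀, hd⟩ := exists_potential hsc (fun _ _ => dvd_of_hasWalk_self hcyc) ⟨0, hn⟩
    exact ⟨_, minimalPeriod_cbn_indicator hne hd₀ hd⟩
end
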